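/- Let n ≥ 5 with n ≡ 4 (mod 6), and let x_0,...,x_{n-1} be nonnegative integers (indices modulo n) with x_i ≤ 1, x_i + x_{i+1} + x_{i+2} ≥ 2 for all i, and Σ_{i=0}^{n-1} x_i < 2⌊n/3⌋ + 2. Then x is a cyclic rotation of the sequence (1,1,0,1,1,0,...,1,1,0,1). -/

import Mathlib

/-! Summing the window inequalities gives `3 ∑ x ≥ 2n`, while the bound on `∑ x` and
`n ≡ 1 (mod 3)` force `3 ∑ x = 2n + 1`. So exactly one window, starting at some `i₀`, has sum 3
and all others have sum 2. As `x ≤ 1`, that window is all ones, and from `i₀ + 1` on the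
windows of sum 2 propagate the pattern `1, 1, 0` once around the cycle. -/

open Finset

theorem Fintype.exists_eq_add_one_of_sum_eq_card_mul_add_one {ι : Type*} [Fintype ι]
    {f : ι → ℕ} {c : ℕ} (hc : ∀ i, c ≤ f i) (hf : ∑ i, f i = Fintype.card ι * c + 1) :
    ∃ i₀, f i₀ = c + 1 ∧ ∀ j, j ≠ i₀ → f j = c := by
  have hexcess : ∑ i, (f i - c) = 1 := by
    rw [sum_tsub_distrib _ fun i _ => hc i, hf, sum_const, card_univ, smul_eq_mul]
    omega
  obtain ⟨i₀, -, hi₀⟩ := exists_ne_zero_of_sum_ne_zero (hexcess.trans_ne one_ne_zero)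
  have hunique := sum_le_one_iff.mp hexcess.le
  refine ⟨i₀, ?_, fun j hj => ?_⟩
  · have := (hunique i₀ i₀ (mem_univ _) (mem_univ _) hi₀ hi₀).2
    have := hc i₀
    omega
  · by_contra hne
    exact hj (hunique j i₀ (mem_univ _) (mem_univ _) (by have := hc j; omega) hi₀).1

theorem ZMod.sum_range_natCast {M : Type*} [AddCommMonoid M] (n : ℕ) [NeZero n]
    (f : ZMod n → M) : ∑ i ∈ range n, f i = ∑ j, f j := by
  refine sum_nbij' (fun i => (i : ZMod n)) ZMod.val ?_ ?_ ?_ ?_ ?_ <;>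
    simp +contextual [ZMod.val_lt, Nat.mod_eq_of_lt]

theorem Fintype.sum_window_eq {G M : Type*} [AddGroup G] [Fintype G] [AddCommMonoid M]
    (x : G → M) (a b : G) : ∑ j, (x j + x (j + a) + x (j + b)) = 3 • ∑ j, x j := by
  have hshift (c : G) : ∑ j, x (j + c) = ∑ j, x j :=
    Fintype.sum_equiv (Equiv.addRight c) _ _ fun _ => rfl
  rw [sum_add_distrib, sum_add_distrib, hshift, hshift, succ_nsmul, two_nsmul]

theorem ZMod.exists_rotation_of_forall_add_natCast {α : Type*} {n : ℕ} [NeZero n]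
    {x : ZMod n → α} {p : ℕ → α} (a : ZMod n) (h : ∀ t < n, x (a + t) = p t) :
    ∃ r : ℕ, ∀ i < n, x i = p ((i + r) % n) := by
  refine ⟨n - a.val, fun i _ => ?_⟩
  have hshift : a + (((i + (n - a.val)) % n : ℕ) : ZMod n) = i := by
    rw [ZMod.natCast_mod, Nat.cast_add, Nat.cast_sub a.val_lt.le, ZMod.natCast_self,
      ZMod.natCast_zmod_val]
    ring
  rw [← h _ (Nat.mod_lt _ (NeZero.pos n)), hshift]

def pattern110 (t : ℕ) : ℕ := if t % 3 = 2 then 0 else 1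

theorem pattern110_window (s : ℕ) :
    pattern110 s + pattern110 (s + 1) + pattern110 (s + 2) = 2 := by
  unfold pattern110
  split_ifs <;> omega

theorem eq_pattern110_of_window_eq_two {y : ℕ → ℕ} {m : ℕ} (h0 : y 0 = 1) (h1 : y 1 = 1)
    (hw : ∀ s < m, y s + y (s + 1) + y (s + 2) = 2) : ∀ t < m + 2, y t = pattern110 t := by
  suffices h : ∀ s ≤ m, y s = pattern110 s ∧ y (s + 1) = pattern110 (s + 1) by
    intro t ht
    rcases Nat.lt_or_ge t (m + 1) with ht' | ht'
    · exact (h t (by omega)).1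
    · simpa [show t = m + 1 by omega] using (h m le_rfl).2
  intro s hs
  induction s with
  | zero => exact ⟨h0, h1⟩
  | succ s ih =>
    obtain ⟨hs₀, hs₁⟩ := ih (by omega)
    have := hw s (by omega)
    have := pattern110_window s
    exact ⟨hs₁, show y (s + 2) = pattern110 (s + 2) by omega⟩

theorem ZMod.sum_window_eq_mul_two_add_one {n : ℕ} [NeZero n] (hn : n % 3 = 1) {x : ZMod n → ℕ}
    (hsum : ∀ i, 2 ≤ x i + x (i + 1) + x (i + 2)) (hlt : ∑ i, x i < 2 * (n / 3) + 2) :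
    ∑ i, (x i + x (i + 1) + x (i + 2)) = n * 2 + 1 := by
  have hge : n * 2 ≤ ∑ i, (x i + x (i + 1) + x (i + 2)) := by
    simpa using card_nsmul_le_sum univ _ 2 fun i _ => hsum i
  rw [Fintype.sum_window_eq, smul_eq_mul] at hge ⊢
  omega

theorem solution_is_rotation_4_mod_6_general (n : ℕ) (h6 : n % 6 = 4) (x : ZMod n → ℕ)
    (hle : ∀ i, x i ≤ 1) (hsum : ∀ i, 2 ≤ x i + x (i + 1) + x (i + 2))
    (hlt : ∑ i ∈ Finset.range n, x (i : ZMod n) < 2 * (n / 3) + 2) :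
    ∃ r : ℕ, ∀ i < n, x (i : ZMod n) = if (i + r) % n % 3 = 2 then 0 else 1 := by
  have : NeZero n := ⟨by omega⟩
  rw [ZMod.sum_range_natCast] at hlt
  obtain ⟨i₀, hi₀ : x i₀ + x (i₀ + 1) + x (i₀ + 2) = 2 + 1, hrest⟩ :=
    Fintype.exists_eq_add_one_of_sum_eq_card_mul_add_one hsum
      (by rw [ZMod.card]; exact ZMod.sum_window_eq_mul_two_add_one (by omega) hsum hlt)
  have hstart : x (i₀ + 1) = 1 ∧ x (i₀ + 2) = 1 := by
    have := hle i₀; have := hle (i₀ + 1); have := hle (i₀ + 2); omega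
  have hw : ∀ s < n - 1,
      x (i₀ + 1 + s) + x (i₀ + 1 + (s + 1 : ℕ)) + x (i₀ + 1 + (s + 2 : ℕ)) = 2 := by
    intro s hs
    have hne : i₀ + 1 + s ≠ i₀ := by
      rw [Ne, add_assoc, add_eq_left, ← Nat.cast_one, ← Nat.cast_add, ZMod.natCast_eq_zero_iff]
      exact Nat.not_dvd_of_pos_of_lt (by omega) (by omega)
    simpa [add_assoc, one_add_one_eq_two] using hrest _ hne
  exact ZMod.exists_rotation_of_forall_add_natCast (i₀ + 1) fun t ht =>
    eq_pattern110_of_window_eq_two (y := fun t => x (i₀ + 1 + t)) (by simpa using hstart.1)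
      (by simpa [add_assoc, one_add_one_eq_two] using hstart.2) hw t (by omega)

theorem solution_is_rotation_4_mod_6 (n : ℕ) (hn : 5 ≤ n) (h6 : n % 6 = 4) (x : ZMod n → ℕ)
    (hle : ∀ i, x i ≤ 1) (hsum : ∀ i, 2 ≤ x i + x (i + 1) + x (i + 2))
    (hlt : ∑ i ∈ Finset.range n, x (i : ZMod n) < 2 * (n / 3) + 2) :
    ∃ r : ℕ, ∀ i < n, x (i : ZMod n) = if (i + r) % n % 3 = 2 then 0 else 1 :=
  solution_is_rotation_4_mod_6_general n h6 x hle hsum hlt
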